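/- Let a_-, b_-, a_+, b_+ be real numbers and k ≥ 0 be such that DET_k := 2a_+a_- + ((k+1)^2 + (k+2)^2)(a_-b_+ - a_+b_-) - 2b_-b_+(k+1)^2(k+2)^2 ≠ 0. Define a_k = 4(k+1)(a_+b_- + a_-b_+)/DET_k and b_k = (-2a_-a_+ + (k^2+(k+1)^2)(a_+b_- - a_-b_+) + 2b_-b_+ k^2(k+1)^2)/DET_k. Then the polynomial φ_k(x) = T_k(x) + a_k T_{k+1}(x) + b_k T_{k+2}(x) satisfies the Robin boundary conditions a_- φ_k(-1) + b_- φ_k'(-1) = 0 and a_+ φ_k(1) + b_+ φ_k'(1) = 0. -/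

import Mathlib

/-!
Since `T_n(1) = 1`, `T_n(-1) = (-1)^n`, `T_n'(1) = n^2` and `T_n'(-1) = (-1)^(n-1) n^2`, the two
Robin conditions on `φ_k` are linear equations in `(a_k, b_k)` with determinant `DET_k`, and the
stated `a_k`, `b_k` are their solution by Cramer's rule.
-/

open Polynomial Polynomial.Chebyshev

namespace Polynomial.Chebyshev

variable {R : Type*} [CommRing R]

theorem derivative_T_eval_neg_one (n : ℤ) :
    (derivative (T R n)).eval (-1) = ((n - 1).negOnePow : R) * n ^ 2 := by
  simp only [T_derivative_eq_U, eval_mul, eval_intCast, U_eval_neg_one]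
  push_cast
  ring

noncomputable def robinBasis (k : ℤ) (a b : R) : R[X] :=
  T R k + Polynomial.C a * T R (k + 1) + Polynomial.C b * T R (k + 2)

theorem robinBasis_eval_one (k : ℤ) (a b : R) : (robinBasis k a b).eval 1 = 1 + a + b := by
  simp only [robinBasis, eval_add, eval_mul, eval_C, T_eval_one, mul_one]

theorem derivative_robinBasis_eval_one (k : ℤ) (a b : R) :
    (derivative (robinBasis k a b)).eval 1 = k ^ 2 + a * (k + 1) ^ 2 + b * (k + 2) ^ 2 := by
  simp only [robinBasis, derivative_add, derivative_C_mul, eval_add, eval_mul, eval_C,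
    derivative_T_eval_one]
  push_cast
  ring

theorem robinBasis_eval_neg_one (k : ℤ) (a b : R) :
    (robinBasis k a b).eval (-1) = (k.negOnePow : R) * (1 - a + b) := by
  simp only [robinBasis, eval_add, eval_mul, eval_C, T_eval_neg_one, Int.negOnePow_add,
    Int.negOnePow_one, Int.negOnePow_even 2 even_two]
  push_cast
  ring

theorem derivative_robinBasis_eval_neg_one (k : ℤ) (a b : R) :
    (derivative (robinBasis k a b)).eval (-1) =
      -(k.negOnePow : R) * (k ^ 2 - a * (k + 1) ^ 2 + b * (k + 2) ^ 2) := by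
  simp only [robinBasis, derivative_add, derivative_C_mul, eval_add, eval_mul, eval_C,
    derivative_T_eval_neg_one, Int.negOnePow_sub, Int.negOnePow_add, Int.negOnePow_one,
    Int.negOnePow_even 2 even_two, add_sub_cancel_right]
  push_cast
  ring

end Polynomial.Chebyshev

theorem robin_compact_basis_bc (am bm ap bp : ℝ) (k : ℕ) (DET ak bk : ℝ)
    (hDET : DET = 2 * ap * am + (((k : ℝ) + 1) ^ 2 + ((k : ℝ) + 2) ^ 2) * (am * bp - ap * bm)
      - 2 * bm * bp * ((k : ℝ) + 1) ^ 2 * ((k : ℝ) + 2) ^ 2)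
    (hDET0 : DET ≠ 0)
    (hak : ak = 4 * ((k : ℝ) + 1) * (ap * bm + am * bp) / DET)
    (hbk : bk = (-(2 * am * ap) + ((k : ℝ) ^ 2 + ((k : ℝ) + 1) ^ 2) * (ap * bm - am * bp)
      + 2 * bm * bp * (k : ℝ) ^ 2 * ((k : ℝ) + 1) ^ 2) / DET) :
    am * (Chebyshev.T ℝ k + Polynomial.C ak * Chebyshev.T ℝ (k + 1)
          + Polynomial.C bk * Chebyshev.T ℝ (k + 2)).eval (-1)
      + bm * (Polynomial.derivative (Chebyshev.T ℝ k + Polynomial.C ak * Chebyshev.T ℝ (k + 1)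
          + Polynomial.C bk * Chebyshev.T ℝ (k + 2))).eval (-1) = 0 ∧
    ap * (Chebyshev.T ℝ k + Polynomial.C ak * Chebyshev.T ℝ (k + 1)
          + Polynomial.C bk * Chebyshev.T ℝ (k + 2)).eval 1
      + bp * (Polynomial.derivative (Chebyshev.T ℝ k + Polynomial.C ak * Chebyshev.T ℝ (k + 1)
          + Polynomial.C bk * Chebyshev.T ℝ (k + 2))).eval 1 = 0 := by
  have hφ : Chebyshev.T ℝ k + Polynomial.C ak * Chebyshev.T ℝ (k + 1)
      + Polynomial.C bk * Chebyshev.T ℝ (k + 2) = robinBasis k ak bk := rfl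
  have hleft : am * (1 - ak + bk) - bm * (k ^ 2 - ak * (k + 1) ^ 2 + bk * (k + 2) ^ 2) = 0 := by
    rw [hak, hbk]
    field_simp
    rw [hDET]
    ring
  have hright : ap * (1 + ak + bk) + bp * (k ^ 2 + ak * (k + 1) ^ 2 + bk * (k + 2) ^ 2) = 0 := by
    rw [hak, hbk]
    field_simp
    rw [hDET]
    ring
  rw [hφ, robinBasis_eval_one, derivative_robinBasis_eval_one, robinBasis_eval_neg_one,
    derivative_robinBasis_eval_neg_one]
  push_cast
  exact ⟨by linear_combination ((k : ℤ).negOnePow : ℝ) * hleft, hright⟩
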